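/- arXiv:1101.2363 — 6 statements merged into one kernel-verified Lean document; each statement's English description precedes it below -/
import Mathlib

section
/- Let (S,J) be a site and let J_un denote the class of universal J-epimorphisms (morphisms p : P → A such that there is a covering family (U_i → A) with each U_i → A factoring through p, and all pullbacks of p exist). If K is a singleton pretopology with J ⊆ K ⊆ J_un (i.e. J is cofinal in K), then J_un = K_un. -/
open CategoryTheory CategoryTheory.Limits

universe v u

/-- A singleton Grothendieck pretopology on a category `S`: a class of morphisms
("covers") containing the isomorphisms, closed under composition, and such that
the pullback of a cover along any morphism exists and is again a cover. -/
structure SingletonPretopology (S : Type u) [Category.{v} S] where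
  covers : ∀ ⦃U A : S⦄, (U ⟶ A) → Prop
  covers_of_isIso : ∀ ⦃U A : S⦄ (f : U ⟶ A), IsIso f → covers f
  covers_comp : ∀ ⦃U V A : S⦄ (g : U ⟶ V) (f : V ⟶ A),
    covers g → covers f → covers (g ≫ f)
  covers_pullback : ∀ ⦃U A B : S⦄ (f : U ⟶ A), covers f → ∀ g : B ⟶ A,
    ∃ (P : S) (p : P ⟶ B) (q : P ⟶ U), IsPullback p q g f ∧ covers p

variable {S : Type u} [Category.{v} S]

/-- A singleton pretopology is saturated if `g ∘ h` a cover implies `g` is a cover. -/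
def SingletonPretopology.Saturated (J : SingletonPretopology S) : Prop :=
  ∀ ⦃A B X : S⦄ (h : A ⟶ B) (g : B ⟶ X), J.covers (h ≫ g) → J.covers g

/-- `p : P ⟶ A` is a `K`-epimorphism for a class `K` of morphisms:
some `K`-cover of `A` lifts through `p`. -/
def ClassJEpi (K : ∀ ⦃U A : S⦄, (U ⟶ A) → Prop) ⦃P A : S⦄ (p : P ⟶ A) : Prop :=
  ∃ (U : S) (u : U ⟶ A), K u ∧ ∃ l : U ⟶ P, l ≫ p = u

/-- `p` is a universal `K`-epimorphism: a `K`-epimorphism all of whose pullbacks exist. -/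
def ClassUn (K : ∀ ⦃U A : S⦄, (U ⟶ A) → Prop) ⦃P A : S⦄ (p : P ⟶ A) : Prop :=
  ClassJEpi K p ∧ ∀ ⦃B : S⦄ (g : B ⟶ A), ∃ (Q : S) (q : Q ⟶ B) (r : Q ⟶ P), IsPullback q r g p

/-- `p : P ⟶ A` is a `J`-epimorphism for a singleton pretopology `J`. -/
def SingletonPretopology.JEpi (J : SingletonPretopology S) ⦃P A : S⦄ (p : P ⟶ A) : Prop :=
  ClassJEpi J.covers p

/-- The class `J_un` of universal `J`-epimorphisms. -/
def SingletonPretopology.Jun (J : SingletonPretopology S) ⦃P A : S⦄ (p : P ⟶ A) : Prop :=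
  ClassUn J.covers p

/-- A singleton pretopology is subcanonical if every cover is an effective epimorphism
(the coequaliser of its kernel pair). -/
def SingletonPretopology.Subcanonical (J : SingletonPretopology S) : Prop :=
  ∀ ⦃U A : S⦄ (f : U ⟶ A), J.covers f → EffectiveEpi f

/-- WISC for a class `K` of morphisms: every object has a weakly initial set of
`K`-covers, i.e. a (small) family of `K`-covers such that every `K`-cover is refined
by one of them. -/
def ClassWISC (K : ∀ ⦃U A : S⦄, (U ⟶ A) → Prop) : Prop :=
  ∀ A : S, ∃ (ι : Type v) (U : ι → S) (u : ∀ i, U i ⟶ A),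
    (∀ i, K (u i)) ∧
    ∀ ⦃V : S⦄ (v : V ⟶ A), K v → ∃ (i : ι) (h : U i ⟶ V), h ≫ v = u i

/-- If `J` is cofinal in a singleton pretopology `K` (i.e. `J ⊆ K ⊆ J_un`), then the
universal `J`-epimorphisms coincide with the universal `K`-epimorphisms: `J_un = K_un`. -/
theorem jun_eq_kun_of_cofinal {S : Type u} [Category.{v} S]
    (J K : SingletonPretopology S)
    (hJK : ∀ ⦃U A : S⦄ (f : U ⟶ A), J.covers f → K.covers f)
    (hKJ : ∀ ⦃U A : S⦄ (f : U ⟶ A), K.covers f → J.Jun f) :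
    ∀ ⦃P A : S⦄ (p : P ⟶ A), J.Jun p ↔ K.Jun p := by
  intro P A p
  constructor
  · rintro ⟨⟨U, u, hu, l, hl⟩, hpb⟩
    exact ⟨⟨U, u, hJK u hu, l, hl⟩, hpb⟩
  · rintro ⟨⟨U, u, hu, l, hl⟩, hpb⟩
    obtain ⟨⟨V, v, hv, m, hm⟩, _⟩ := hKJ u hu
    exact ⟨⟨V, v, hv, m ≫ l, by rw [Category.assoc, hl, hm]⟩, hpb⟩
end

section
/- If a singleton pretopology J on a category S is subcanonical (every cover is a regular epimorphism, being the coequalizer of its kernel pair) and J is cofinal in a singleton pretopology K (J ⊆ K ⊆ J_un), then K is also subcanonical. -/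
open CategoryTheory CategoryTheory.Limits

universe v u

variable {S : Type u} [Category.{v} S]

/-- If the singleton pretopology `J` is subcanonical and `J` is cofinal in `K`
(`J ⊆ K ⊆ J_un`), then `K` is subcanonical as well. -/
theorem subcanonical_of_cofinal {S : Type u} [Category.{v} S]
    (J K : SingletonPretopology S)
    (hJsub : J.Subcanonical)
    (hJK : ∀ ⦃U A : S⦄ (f : U ⟶ A), J.covers f → K.covers f)
    (hKJ : ∀ ⦃U A : S⦄ (f : U ⟶ A), K.covers f → J.Jun f) :
    K.Subcanonical := by
  intro X A f hf
  obtain ⟨⟨V, u, hu, l, hl⟩, -⟩ := hKJ f hf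
  -- `u` is an effective epi since `J` is subcanonical
  haveI hue : EffectiveEpi u := hJsub u hu
  -- pullback of the `J`-cover `u` along `f`
  obtain ⟨P, p, q, hpb, hp⟩ := J.covers_pullback u hu f
  haveI hpe : EffectiveEpi p := hJsub p hp
  constructor
  refine ⟨{
    desc := fun {W} e h => EffectiveEpi.desc u (l ≫ e)
      (fun {Z} g₁ g₂ hg => by
        rw [← Category.assoc, ← Category.assoc]
        exact h (g₁ ≫ l) (g₂ ≫ l) (by
          rw [Category.assoc, Category.assoc, hl, hg]))
    fac := fun {W} e h => by
      have key : p ≫ f ≫ EffectiveEpi.desc u (l ≫ e)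
          (fun {Z} g₁ g₂ hg => by
            rw [← Category.assoc, ← Category.assoc]
            exact h (g₁ ≫ l) (g₂ ≫ l) (by
              rw [Category.assoc, Category.assoc, hl, hg])) = p ≫ e := by
        rw [← Category.assoc, hpb.w, Category.assoc, EffectiveEpi.fac]
        rw [← Category.assoc]
        exact h (q ≫ l) p (by rw [Category.assoc, hl, ← hpb.w])
      exact (cancel_epi p).mp key
    uniq := fun {W} e h m hm => by
      have : u ≫ m = u ≫ EffectiveEpi.desc u (l ≫ e)
          (fun {Z} g₁ g₂ hg => by
            rw [← Category.assoc, ← Category.assoc]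
            exact h (g₁ ≫ l) (g₂ ≫ l) (by
              rw [Category.assoc, Category.assoc, hl, hg])) := by
        rw [EffectiveEpi.fac, ← hl, Category.assoc, hm]
      exact (cancel_epi u).mp this }⟩
end

section
/- If a site (S,J) satisfies WISC (for every object A, the category of J-covering families of A has a weakly initial set), then the site (S, J_un) of universal J-epimorphisms also satisfies WISC. -/
open CategoryTheory CategoryTheory.Limits

universe v u

variable {S : Type u} [Category.{v} S]

/-- If the unary site `(S,J)` satisfies WISC, then so does `(S, J_un)`, the site of
universal `J`-epimorphisms. -/
theorem wisc_jun_of_wisc {S : Type u} [Category.{v} S]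
    (J : SingletonPretopology S)
    (hW : ClassWISC (fun ⦃U A : S⦄ (f : U ⟶ A) => J.covers f)) :
    ClassWISC (fun ⦃U A : S⦄ (f : U ⟶ A) => J.Jun f) := by
  intro A
  obtain ⟨ι, U, u, hcov, href⟩ := hW A
  refine ⟨ι, U, u, fun i => ?_, ?_⟩
  · refine ⟨⟨U i, u i, hcov i, 𝟙 _, Category.id_comp _⟩, fun B g => ?_⟩
    obtain ⟨P, p, q, hpb, _⟩ := J.covers_pullback (u i) (hcov i) g
    exact ⟨P, p, q, hpb⟩
  · rintro V v ⟨⟨W, w, hw, l, hl⟩, -⟩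
    obtain ⟨i, h, hh⟩ := href w hw
    exact ⟨i, h ≫ l, by rw [Category.assoc, hl, hh]⟩
end

section
/- Let B be a bicategory, V ⊆ W classes of 1-cells such that for every w : a → c in W there exist v : b → c in V, s : b → a in W, and an invertible 2-cell w∘s ≅ v. If a weak 2-functor F : B → D sends every element of V to an equivalence, then F sends every element of W to an equivalence. -/
open CategoryTheory

universe w₁ w₂ v₁ v₂ u₁ u₂

/-- A 1-cell in a bicategory is an equivalence if it admits a pseudoinverse. -/
def IsEquiv1Cell {B : Type u₁} [Bicategory.{w₁, v₁} B] {a b : B} (f : a ⟶ b) : Prop :=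
  ∃ g : b ⟶ a, Nonempty (f ≫ g ≅ 𝟙 a) ∧ Nonempty (g ≫ f ≅ 𝟙 b)

open Bicategory

lemma IsEquiv1Cell.of_iso {B : Type u₁} [Bicategory.{w₁, v₁} B] {a b : B} {f g : a ⟶ b}
    (e : f ≅ g) (hf : IsEquiv1Cell f) : IsEquiv1Cell g := by
  obtain ⟨h, ⟨i₁⟩, ⟨i₂⟩⟩ := hf
  exact ⟨h, ⟨whiskerRightIso e.symm h ≪≫ i₁⟩, ⟨whiskerLeftIso h e.symm ≪≫ i₂⟩⟩

/-- A 1-cell with left and right pseudoinverses is an equivalence. -/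
lemma IsEquiv1Cell.of_left_right {B : Type u₁} [Bicategory.{w₁, v₁} B] {a b : B}
    {u : a ⟶ b} {r l : b ⟶ a} (hr : u ≫ r ≅ 𝟙 a) (hl : l ≫ u ≅ 𝟙 b) :
    IsEquiv1Cell u := by
  have e : r ≅ l := (λ_ r).symm ≪≫ whiskerRightIso hl.symm r ≪≫ α_ l u r ≪≫
    whiskerLeftIso l hr ≪≫ ρ_ l
  exact ⟨r, ⟨hr⟩, ⟨whiskerRightIso e u ≪≫ hl⟩⟩

/-- Right cancellation: if `u` and `u ≫ f` are equivalences, so is `f`. -/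
lemma IsEquiv1Cell.cancel_left {B : Type u₁} [Bicategory.{w₁, v₁} B] {a b c : B}
    {u : a ⟶ b} {f : b ⟶ c} (hu : IsEquiv1Cell u) (huf : IsEquiv1Cell (u ≫ f)) :
    IsEquiv1Cell f := by
  obtain ⟨r, ⟨_⟩, ⟨hr₂⟩⟩ := hu
  obtain ⟨g, ⟨hg₁⟩, ⟨hg₂⟩⟩ := huf
  refine ⟨g ≫ u, ⟨?_⟩, ⟨α_ g u f ≪≫ hg₂⟩⟩
  have ef : f ≅ r ≫ (u ≫ f) := (λ_ f).symm ≪≫ whiskerRightIso hr₂.symm f ≪≫ α_ r u f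
  exact whiskerRightIso ef (g ≫ u) ≪≫ α_ r (u ≫ f) (g ≫ u) ≪≫
    whiskerLeftIso r ((α_ (u ≫ f) g u).symm ≪≫ whiskerRightIso hg₁ u ≪≫ λ_ u) ≪≫ hr₂

/-- If `V ⊆ W` are classes of 1-cells of a bicategory `B` such that every `w ∈ W`
factors up to invertible 2-cell as `w ∘ s ≅ v` with `v ∈ V` and `s ∈ W`, then a weak
2-functor sending every element of `V` to an equivalence also sends every element of
`W` to an equivalence. -/
theorem pseudofunctor_inverts_W_of_inverts_V
    {B : Type u₁} [Bicategory.{w₁, v₁} B] {D : Type u₂} [Bicategory.{w₂, v₂} D]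
    (V W : ∀ ⦃a b : B⦄, (a ⟶ b) → Prop)
    (hVW : ∀ ⦃a b : B⦄ (f : a ⟶ b), V f → W f)
    (hfac : ∀ ⦃a c : B⦄ (w : a ⟶ c), W w →
      ∃ (b : B) (v : b ⟶ c) (s : b ⟶ a), V v ∧ W s ∧ Nonempty (s ≫ w ≅ v))
    (F : Pseudofunctor B D)
    (hF : ∀ ⦃a b : B⦄ (v : a ⟶ b), V v → IsEquiv1Cell (F.map v)) :
    ∀ ⦃a b : B⦄ (w : a ⟶ b), W w → IsEquiv1Cell (F.map w) := by
  intro a c w hw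
  obtain ⟨b, v, s, hv, hs, ⟨η⟩⟩ := hfac w hw
  obtain ⟨b', v', t, hv', ht, ⟨η'⟩⟩ := hfac s hs
  have e₁ : F.map s ≫ F.map w ≅ F.map v := (F.mapComp s w).symm ≪≫ F.map₂Iso η
  have e₂ : F.map t ≫ F.map s ≅ F.map v' := (F.mapComp t s).symm ≪≫ F.map₂Iso η'
  have huf : IsEquiv1Cell (F.map s ≫ F.map w) := (hF v hv).of_iso e₁.symm
  have hts : IsEquiv1Cell (F.map t ≫ F.map s) := (hF v' hv').of_iso e₂.symm
  obtain ⟨g, ⟨g₁⟩, _⟩ := huf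
  obtain ⟨h, _, ⟨h₂⟩⟩ := hts
  have hu : IsEquiv1Cell (F.map s) :=
    IsEquiv1Cell.of_left_right ((α_ (F.map s) (F.map w) g).symm ≪≫ g₁)
      (α_ h (F.map t) (F.map s) ≪≫ h₂)
  exact hu.cancel_left ((hF v hv).of_iso e₁.symm)
end

section
/- Let S be an extensive category with a superextensive pretopology J. Define ⨿J to be the class of arrows isomorphic over their codomain to ∐_{i∈I} U_i → A for J-covering families (U_i → A)_{i∈I}. Then ⨿J is a singleton pretopology, and ⨿J is subcanonical if and only if J is. -/
open CategoryTheory CategoryTheory.Limits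

universe v u

variable {S : Type u} [Category.{v} S]

/-- A covering family of an object `A`: an indexed family of morphisms into `A`. -/
structure CoverFam {S : Type u} [Category.{v} S] (A : S) : Type (max u (v + 1)) where
  ι : Type v
  obj : ι → S
  hom : ∀ i, obj i ⟶ A

/-- A Grothendieck pretopology on `S` given by covering families: contains the
isomorphisms, is stable under pullback (the pullbacks being required to exist), and is
closed under composition of covering families. -/
structure FamPretopology (S : Type u) [Category.{v} S] where
  covers : ∀ ⦃A : S⦄, CoverFam A → Prop
  covers_of_isIso : ∀ ⦃A B : S⦄ (f : B ⟶ A), IsIso f →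
    covers ⟨PUnit.{v + 1}, fun _ => B, fun _ => f⟩
  covers_pullback : ∀ ⦃A B : S⦄ (F : CoverFam A), covers F → ∀ g : B ⟶ A,
    ∃ (P : F.ι → S) (p : ∀ i, P i ⟶ B) (q : ∀ i, P i ⟶ F.obj i),
      (∀ i, IsPullback (p i) (q i) g (F.hom i)) ∧ covers ⟨F.ι, P, p⟩
  covers_comp : ∀ ⦃A : S⦄ (F : CoverFam A), covers F →
    ∀ (G : ∀ i : F.ι, CoverFam (F.obj i)), (∀ i, covers (G i)) →
      covers ⟨(Σ i : F.ι, (G i).ι), fun x => (G x.1).obj x.2,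
        fun x => (G x.1).hom x.2 ≫ F.hom x.1⟩

variable {S : Type u} [Category.{v} S]

/-- `S` is (infinitary) extensive: a family of commuting squares over a coproduct
consists of pullbacks if and only if the left legs form a coproduct diagram. -/
def InfExtensive (S : Type u) [Category.{v} S] [HasCoproducts.{v} S] : Prop :=
  ∀ {ι : Type v} (A : ι → S) (Z : S) (g : Z ⟶ ∐ A) (X : ι → S)
    (top : ∀ i, X i ⟶ A i) (left : ∀ i, X i ⟶ Z),
    (∀ i, left i ≫ g = top i ≫ Sigma.ι A i) →
    ((∀ i, IsPullback (left i) (top i) g (Sigma.ι A i)) ↔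
      Nonempty (IsColimit (Cofan.mk Z left)))

/-- The pretopology `J` is superextensive: every coproduct-injection family is covering. -/
def FamPretopology.Superextensive [HasCoproducts.{v} S] (J : FamPretopology S) : Prop :=
  ∀ {ι : Type v} (U : ι → S), J.covers ⟨ι, U, fun i => Sigma.ι U i⟩

/-- The singleton pretopology `⨿J`: morphisms isomorphic over their codomain to
`∐ᵢ Uᵢ ⟶ A` for a `J`-covering family `(Uᵢ ⟶ A)ᵢ`. -/
def CoprodCovers [HasCoproducts.{v} S] (J : FamPretopology S)
    ⦃B A : S⦄ (f : B ⟶ A) : Prop :=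
  ∃ F : CoverFam A, J.covers F ∧ ∃ e : B ≅ ∐ F.obj, f = e.hom ≫ Sigma.desc F.hom

/-- A family pretopology is subcanonical if each covering family is effective,
i.e. an effective-epimorphic family. -/
def FamPretopology.Subcanonical (J : FamPretopology S) : Prop :=
  ∀ ⦃A : S⦄ (F : CoverFam A), J.covers F → EffectiveEpiFamily F.obj F.hom


section AuxProof
variable [HasCoproducts.{v} S]

private lemma decompose_along (hext : InfExtensive S) {J : FamPretopology S}
    (hJ : J.Superextensive) {ι : Type v} (X : ι → S) {Z : S} (g : Z ⟶ ∐ X) :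
    ∃ (T : ι → S) (t : ∀ i, T i ⟶ Z) (s : ∀ i, T i ⟶ X i),
      (∀ i, IsPullback (t i) (s i) g (Sigma.ι X i)) ∧
        Nonempty (IsColimit (Cofan.mk Z t)) := by
  obtain ⟨T, t, s, hpb, -⟩ := J.covers_pullback _ (hJ X) g
  exact ⟨T, t, s, hpb, (hext X Z g T s t (fun i => (hpb i).w)).mp hpb⟩

private lemma desc_isPullback (hext : InfExtensive S) {J : FamPretopology S}
    (hJ : J.Superextensive)
    {ι : Type v} {A B : S} {Y : ι → S} (v : ∀ i, Y i ⟶ A) (g : B ⟶ A)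
    {P : ι → S} (p : ∀ i, P i ⟶ B) (q : ∀ i, P i ⟶ Y i)
    (hpb : ∀ i, IsPullback (p i) (q i) g (v i)) :
    IsPullback (Sigma.desc p) (Sigma.desc fun i => q i ≫ Sigma.ι Y i) g (Sigma.desc v) := by
  have w : Sigma.desc p ≫ g = (Sigma.desc fun i => q i ≫ Sigma.ι Y i) ≫ Sigma.desc v := by
    ext i
    simp [(hpb i).w]
  have hι : ∀ i, IsPullback (Sigma.ι P i) (q i)
      (Sigma.desc fun i => q i ≫ Sigma.ι Y i) (Sigma.ι Y i) :=
    (hext Y (∐ P) _ P q (fun i => Sigma.ι P i) (by simp)).mpr ⟨coproductIsCoproduct P⟩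
  have key : ∀ (T : S) (sf : T ⟶ B) (ss : T ⟶ ∐ Y), sf ≫ g = ss ≫ Sigma.desc v →
      ∃! m : T ⟶ ∐ P, m ≫ Sigma.desc p = sf ∧
        m ≫ (Sigma.desc fun i => q i ≫ Sigma.ι Y i) = ss := by
    intro T sf ss hcomm
    obtain ⟨Ti, t, sy, hT, ⟨cT⟩⟩ := decompose_along hext hJ Y ss
    have hw : ∀ i, (t i ≫ sf) ≫ g = sy i ≫ v i := by
      intro i
      rw [Category.assoc, hcomm, ← Category.assoc, (hT i).w]
      simp
    refine ⟨cT.desc (Cofan.mk (∐ P) fun i => (hpb i).lift (t i ≫ sf) (sy i) (hw i) ≫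
      Sigma.ι P i), ⟨?_, ?_⟩, ?_⟩
    · refine cT.hom_ext fun ⟨i⟩ => ?_
      rw [← Category.assoc, cT.fac]
      simp [(hpb i).lift_fst]
    · refine cT.hom_ext fun ⟨i⟩ => ?_
      rw [← Category.assoc, cT.fac]
      simp only [Cofan.mk_ι_app, Category.assoc, colimit.ι_desc]
      rw [← Category.assoc, (hpb i).lift_snd, (hT i).w]
    · rintro m ⟨h1, h2⟩
      refine cT.hom_ext fun ⟨i⟩ => ?_
      rw [cT.fac]
      have h3 : (t i ≫ m) ≫ (Sigma.desc fun i => q i ≫ Sigma.ι Y i) = sy i ≫ Sigma.ι Y i := by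
        rw [Category.assoc, h2, (hT i).w]
      have hk1 := (hι i).lift_fst (t i ≫ m) (sy i) h3
      have hk2 := (hι i).lift_snd (t i ≫ m) (sy i) h3
      have hk3 : (hι i).lift (t i ≫ m) (sy i) h3 ≫ p i = t i ≫ sf := by
        have : (hι i).lift (t i ≫ m) (sy i) h3 ≫ Sigma.ι P i ≫ Sigma.desc p
            = (t i ≫ m) ≫ Sigma.desc p := by rw [← Category.assoc, hk1]
        simpa [h1] using this
      have hke : (hι i).lift (t i ≫ m) (sy i) h3 = (hpb i).lift (t i ≫ sf) (sy i) (hw i) :=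
        (hpb i).hom_ext (by rw [hk3, (hpb i).lift_fst]) (by rw [hk2, (hpb i).lift_snd])
      simp only [Cofan.mk_ι_app]
      rw [← hk1, hke]
  exact IsPullback.of_isLimit (PullbackCone.IsLimit.mk w
    (fun s => (key s.pt s.fst s.snd s.condition).choose)
    (fun s => (key s.pt s.fst s.snd s.condition).choose_spec.1.1)
    (fun s => (key s.pt s.fst s.snd s.condition).choose_spec.1.2)
    (fun s m h1 h2 => (key s.pt s.fst s.snd s.condition).choose_spec.2 m ⟨h1, h2⟩))

end AuxProof

/-- For a superextensive site `(S,J)` on an extensive category `S`, the class `⨿J` of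
arrows isomorphic over their codomain to `∐ᵢ Uᵢ ⟶ A` for `J`-covering families
`(Uᵢ ⟶ A)` is a singleton pretopology, and it is subcanonical (every `⨿J`-cover is an
effective epimorphism) if and only if `J` is (every `J`-covering family is an
effective-epimorphic family). -/
theorem coprod_singleton_pretopology_and_subcanonical
    {S : Type u} [Category.{v} S] [HasCoproducts.{v} S]
    (hext : InfExtensive S) (J : FamPretopology S) (hJ : J.Superextensive) :
    (∃ K : SingletonPretopology S,
      ∀ ⦃B A : S⦄ (f : B ⟶ A), K.covers f ↔ CoprodCovers J f) ∧
    ((∀ ⦃B A : S⦄ (f : B ⟶ A), CoprodCovers J f → EffectiveEpi f) ↔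
      J.Subcanonical) := by
  constructor
  · -- `⨿J` is a singleton pretopology
    refine ⟨⟨fun _ _ f => CoprodCovers J f, ?_, ?_, ?_⟩, fun B A f => Iff.rfl⟩
    · -- isomorphisms
      intro U A f hf
      refine ⟨⟨PUnit, fun _ => U, fun _ => f⟩, J.covers_of_isIso f hf,
        ⟨Sigma.ι (fun _ : PUnit.{v+1} => U) PUnit.unit, Sigma.desc fun _ => 𝟙 U,
          by simp, ?_⟩, by simp⟩
      ext ⟨⟨⟩⟩
      simp
    · -- composition
      intro U V A g f hg hf
      obtain ⟨G, hG, eU, rfl⟩ := hg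
      obtain ⟨F, hF, eV, rfl⟩ := hf
      choose P pp qq h using fun i => J.covers_pullback G hG (Sigma.ι F.obj i ≫ eV.inv)
      have hKcov := J.covers_comp F hF (fun i => ⟨G.ι, P i, pp i⟩) (fun i => (h i).2)
      have hpb' : ∀ i j, IsPullback (qq i j) (pp i j) (G.hom j ≫ eV.hom) (Sigma.ι F.obj i) :=
        fun i j => ((h i).1 j).flip.of_iso (Iso.refl _) (Iso.refl _) (Iso.refl _) eV
          (by simp) (by simp) (by simp) (by simp)
      have colim : ∀ j, IsColimit (Cofan.mk (G.obj j) (fun i => qq i j)) := fun j =>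
        ((hext F.obj (G.obj j) (G.hom j ≫ eV.hom) (fun i => P i j) (fun i => pp i j)
          (fun i => qq i j) (fun i => (hpb' i j).w)).mp (fun i => hpb' i j)).some
      set Kobj : (Σ _ : F.ι, G.ι) → S := fun x => P x.1 x.2 with hKobj
      set d : ∀ j, G.obj j ⟶ ∐ Kobj :=
        fun j => (colim j).desc (Cofan.mk (∐ Kobj) fun i => Sigma.ι Kobj ⟨i, j⟩) with hd
      have dfac : ∀ i j, qq i j ≫ d j = Sigma.ι Kobj ⟨i, j⟩ := fun i j => by
        simpa using (colim j).fac (Cofan.mk (∐ Kobj) fun i => Sigma.ι Kobj ⟨i, j⟩) ⟨i⟩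
      refine ⟨⟨_, Kobj, fun x => pp x.1 x.2 ≫ F.hom x.1⟩, hKcov,
        ⟨eU.hom ≫ Sigma.desc d,
          Sigma.desc (fun x => qq x.1 x.2 ≫ Sigma.ι G.obj x.2 ≫ eU.inv), ?_, ?_⟩, ?_⟩
      · -- hom ≫ inv = 𝟙
        have key : Sigma.desc d ≫
            Sigma.desc (fun x : Σ _ : F.ι, G.ι => qq x.1 x.2 ≫ Sigma.ι G.obj x.2 ≫ eU.inv)
              = eU.inv := by
          ext j
          refine (colim j).hom_ext fun ⟨i⟩ => ?_
          simp only [Cofan.mk_ι_app, colimit.ι_desc_assoc, Discrete.functor_obj]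
          rw [← Category.assoc, ← Category.assoc, dfac]
          simp
        rw [Category.assoc, key, eU.hom_inv_id]
      · -- inv ≫ hom = 𝟙
        ext ⟨i, j⟩
        simp only [Cofan.mk_ι_app, colimit.ι_desc_assoc, Category.assoc, Category.comp_id,
          Iso.inv_hom_id_assoc, colimit.ι_desc]
        exact dfac i j
      · -- compatibility of the composite
        have key : ∀ j, d j ≫ Sigma.desc (fun x : Σ _ : F.ι, G.ι =>
            pp x.1 x.2 ≫ F.hom x.1) = G.hom j ≫ eV.hom ≫ Sigma.desc F.hom := by
          intro j
          refine (colim j).hom_ext fun ⟨i⟩ => ?_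
          simp only [Cofan.mk_ι_app]
          rw [← Category.assoc, dfac]
          have hw := ((h i).1 j).w
          simp only [colimit.ι_desc, Cofan.mk_ι_app]
          rw [← Category.assoc, ← hw]
          simp
        have main : Sigma.desc G.hom ≫ eV.hom ≫ Sigma.desc F.hom
            = Sigma.desc d ≫ Sigma.desc (fun x : Σ _ : F.ι, G.ι =>
                pp x.1 x.2 ≫ F.hom x.1) := by
          ext j
          simp only [colimit.ι_desc_assoc, Cofan.mk_ι_app]
          exact (key j).symm
        rw [Category.assoc, main, ← Category.assoc]
    · -- pullbacks
      intro U A B f hf g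
      obtain ⟨F, hF, e, rfl⟩ := hf
      obtain ⟨P, p, q, hpb, hcov⟩ := J.covers_pullback F hF g
      refine ⟨∐ P, Sigma.desc p, (Sigma.desc fun i => q i ≫ Sigma.ι F.obj i) ≫ e.inv, ?_,
        ⟨⟨F.ι, P, p⟩, hcov, Iso.refl _, by simp⟩⟩
      exact (desc_isPullback hext hJ F.hom g p q hpb).of_iso (Iso.refl _) (Iso.refl _)
        e.symm (Iso.refl _) (by simp) (by simp) (by simp) (by simp)
  · -- subcanonicity
    constructor
    · intro h1 A F hF
      have hcc : CoprodCovers J (Sigma.desc F.hom) := ⟨F, hF, Iso.refl _, by simp⟩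
      haveI he : EffectiveEpi (Sigma.desc F.hom) := h1 _ hcc
      haveI i1 : ∀ {Z : S} (g : Z ⟶ ∐ F.obj) (a : F.ι), HasPullback g (Sigma.ι F.obj a) := by
        intro Z g a
        obtain ⟨T, t, s, hpb, -⟩ := decompose_along hext hJ F.obj g
        exact HasLimit.mk ⟨_, (hpb a).isLimit⟩
      haveI i3 : ∀ {Z : S} (g : Z ⟶ ∐ F.obj),
          Epi (Sigma.desc fun a => pullback.fst g (Sigma.ι F.obj a)) := by
        intro Z g
        obtain ⟨T, t, s, hpb, ⟨cT⟩⟩ := decompose_along hext hJ F.obj g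
        refine ⟨fun {W} u w huw => cT.hom_ext fun ⟨a⟩ => ?_⟩
        have h2 : pullback.fst g (Sigma.ι F.obj a) ≫ u
            = pullback.fst g (Sigma.ι F.obj a) ≫ w := by
          have := congrArg (fun z =>
            Sigma.ι (fun a => pullback g (Sigma.ι F.obj a)) a ≫ z) huw
          simpa using this
        have h3 : t a = pullback.lift (t a) (s a) (hpb a).w ≫
            pullback.fst g (Sigma.ι F.obj a) := (pullback.lift_fst _ _ _).symm
        simp only [Cofan.mk_ι_app]
        rw [h3, Category.assoc, h2, ← Category.assoc]
      exact ⟨⟨effectiveEpiFamilyStructOfEffectiveEpiDesc F.obj F.hom⟩⟩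
    · rintro hJs B A f ⟨F, hF, e, rfl⟩
      haveI : EffectiveEpiFamily F.obj F.hom := hJs F hF
      have hc : IsColimit (Cofan.mk B fun i => Sigma.ι F.obj i ≫ e.inv) :=
        (coproductIsCoproduct F.obj).ofIsoColimit (Cocones.ext e.symm (fun ⟨i⟩ => by simp))
      have hdesc : hc.desc (Cofan.mk A F.hom) = e.hom ≫ Sigma.desc F.hom := by
        refine hc.hom_ext fun ⟨i⟩ => ?_
        rw [hc.fac]
        simp
      exact ⟨⟨hdesc ▸ effectiveEpiStructIsColimitDescOfEffectiveEpiFamily F.obj _ hc F.hom⟩⟩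
end

section
/- For a superextensive site (S,J), the universal epimorphisms of J coincide with the universal epimorphisms of the associated singleton pretopology ⨿J: a morphism P → A is a universal J-epimorphism if and only if it is a universal ⨿J-epimorphism. Consequently, (S,J) satisfies WISC if and only if (S,⨿J) does. -/
open CategoryTheory CategoryTheory.Limits

universe v u

variable {S : Type u} [Category.{v} S]

variable {S : Type u} [Category.{v} S]

/-- `p : P ⟶ A` is a `J`-epimorphism for the family pretopology `J`: some `J`-covering
family of `A` lifts through `p`. -/
def FamJEpi (J : FamPretopology S) ⦃P A : S⦄ (p : P ⟶ A) : Prop :=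
  ∃ F : CoverFam A, J.covers F ∧ ∀ i, ∃ l : F.obj i ⟶ P, l ≫ p = F.hom i

/-- `p` is a universal `J`-epimorphism for the family pretopology `J`. -/
def FamUn (J : FamPretopology S) ⦃P A : S⦄ (p : P ⟶ A) : Prop :=
  FamJEpi J p ∧ ∀ ⦃B : S⦄ (g : B ⟶ A),
    ∃ (Q : S) (q : Q ⟶ B) (r : Q ⟶ P), IsPullback q r g p

/-- A covering family `G` refines `F` (a morphism of the category `J/A`). -/
def FamRefines {A : S} (G F : CoverFam A) : Prop :=
  ∃ r : G.ι → F.ι, ∀ i, ∃ h : G.obj i ⟶ F.obj (r i), h ≫ F.hom (r i) = G.hom i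

/-- WISC for a family pretopology: every object has a weakly initial set of covering
families. -/
def FamPretopology.WISC (J : FamPretopology S) : Prop :=
  ∀ A : S, ∃ (κ : Type v) (Fam : κ → CoverFam A),
    (∀ k, J.covers (Fam k)) ∧
    ∀ F : CoverFam A, J.covers F → ∃ k, FamRefines (Fam k) F

section AuxWISC

variable {S : Type u} [Category.{v} S] [HasCoproducts.{v} S]

/-- An object is *degenerate* if it admits a unique morphism to every object. -/
def DegObj (Z : S) : Prop := ∀ Y : S, ∃ g : Z ⟶ Y, ∀ g' : Z ⟶ Y, g' = g

lemma degObj_of_hom_pempty (hext : InfExtensive S) {Z W : S}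
    (f : Z ⟶ ∐ (fun _ : PEmpty.{v+1} => W)) : DegObj Z := by
  obtain ⟨cl⟩ := (hext (fun _ : PEmpty.{v+1} => W) Z f (fun _ => W)
      (fun e => e.elim) (fun e => e.elim) (fun e => e.elim)).mp (fun e => e.elim)
  intro Y
  refine ⟨cl.desc (Cofan.mk Y (fun e => e.elim)), fun g' => ?_⟩
  exact cl.uniq (Cofan.mk Y (fun e => e.elim)) g' (by rintro ⟨e⟩; exact e.elim)

lemma degObj_of_injTF_eq (hext : InfExtensive S) {V Z : S} (f g : Z ⟶ V)
    (hfg : f ≫ Sigma.ι (fun _ : ULift.{v} Bool => V) ⟨true⟩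
         = g ≫ Sigma.ι (fun _ : ULift.{v} Bool => V) ⟨false⟩) : DegObj Z := by
  have oDeg : DegObj (∐ (fun _ : PEmpty.{v+1} => V) : S) :=
    degObj_of_hom_pempty hext (𝟙 _)
  set O : S := ∐ (fun _ : PEmpty.{v+1} => V) with hO
  let X : ULift.{v} Bool → S := fun w => bif w.down then O else V
  let left : ∀ w, X w ⟶ V := fun w => match w with
    | ⟨true⟩ => (oDeg V).choose
    | ⟨false⟩ => 𝟙 V
  let top : ∀ w, X w ⟶ V := fun w => match w with
    | ⟨true⟩ => (oDeg V).choose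
    | ⟨false⟩ => 𝟙 V
  have comm : ∀ w, left w ≫ Sigma.ι (fun _ : ULift.{v} Bool => V) ⟨false⟩
      = top w ≫ Sigma.ι (fun _ : ULift.{v} Bool => V) w := by
    rintro ⟨(_|_)⟩
    · rfl
    · obtain ⟨g0, hg0⟩ := oDeg (∐ (fun _ : ULift.{v} Bool => V))
      show (oDeg V).choose ≫ _ = (oDeg V).choose ≫ _
      rw [hg0 ((oDeg V).choose ≫ _), hg0 ((oDeg V).choose ≫ _)]
  have colim : IsColimit (Cofan.mk V left) := by
    refine mkCofanColimit _ (fun t => t.inj ⟨false⟩) ?_ ?_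
    · rintro t ⟨(_|_)⟩
      · show 𝟙 V ≫ _ = _
        simp
      · show (oDeg V).choose ≫ _ = _
        obtain ⟨g0, hg0⟩ := oDeg t.pt
        rw [hg0 ((oDeg V).choose ≫ _), hg0 (t.inj ⟨true⟩)]
    · intro t m hm
      have := hm ⟨false⟩
      show m = t.inj ⟨false⟩
      rw [← this]
      show m = 𝟙 V ≫ m
      simp
  have hpb := (hext (fun _ : ULift.{v} Bool => V) V
      (Sigma.ι (fun _ : ULift.{v} Bool => V) ⟨false⟩) X top left comm).mpr ⟨colim⟩
  have lft : Z ⟶ X ⟨true⟩ := (hpb ⟨true⟩).lift g f hfg.symm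
  exact degObj_of_hom_pempty hext (lft : Z ⟶ O)

noncomputable def group_colimit {Jι K : Type v} {P : Jι → S} {Z : S} (p : ∀ j, P j ⟶ Z)
    (hc : IsColimit (Cofan.mk Z p)) (cl : Jι → K) :
    IsColimit (Cofan.mk Z (fun k =>
      (Sigma.desc (fun jj : {j // cl j = k} => p jj.1)
        : (∐ fun jj : {j // cl j = k} => P jj.1) ⟶ Z))) := by
  have hfac : ∀ {Y : S} (f : ∀ j, P j ⟶ Y) (j : Jι),
      p j ≫ hc.desc (Cofan.mk Y f) = f j := by
    intro Y f j
    simpa using hc.fac (Cofan.mk Y f) ⟨j⟩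
  refine mkCofanColimit _ (fun t => hc.desc (Cofan.mk t.pt
      (fun j => Sigma.ι (fun jj : {j' // cl j' = cl j} => P jj.1) ⟨j, rfl⟩ ≫ t.inj (cl j)))) ?_ ?_
  · intro t k
    show Sigma.desc _ ≫ _ = _
    apply Sigma.hom_ext
    intro jj
    obtain ⟨j, hj⟩ := jj
    have key : ∀ (k' : K) (hj' : cl j = k'),
        Sigma.ι (fun jj : {j' // cl j' = k'} => P jj.1) ⟨j, hj'⟩
          ≫ (Sigma.desc (fun jj : {j' // cl j' = k'} => p jj.1))
          ≫ hc.desc (Cofan.mk t.pt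
            (fun j => Sigma.ι (fun jj : {j' // cl j' = cl j} => P jj.1) ⟨j, rfl⟩
              ≫ t.inj (cl j)))
        = Sigma.ι (fun jj : {j' // cl j' = k'} => P jj.1) ⟨j, hj'⟩ ≫ t.inj k' := by
      rintro k' rfl
      rw [← Category.assoc, Sigma.ι_desc]
      exact hfac _ j
    exact key k hj
  · intro t m hm
    apply hc.hom_ext
    rintro ⟨j⟩
    have h2 : Sigma.ι (fun jj : {j' // cl j' = cl j} => P jj.1) ⟨j, rfl⟩
        ≫ Sigma.desc (fun jj : {j' // cl j' = cl j} => p jj.1) = p j := by simp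
    have hm' := hm (cl j)
    rw [cofan_mk_inj] at hm'
    show p j ≫ m = p j ≫ _
    rw [hfac, ← h2, Category.assoc, hm']

lemma key_refine (hext : InfExtensive S) (J : FamPretopology S) (hJ : J.Superextensive)
    {A Ui : S} (ui : Ui ⟶ A) (Fi : CoverFam A) (hFi : J.covers Fi)
    (e : Ui ≅ ∐ Fi.obj) (he : ui = e.hom ≫ Sigma.desc Fi.hom) :
    ∃ Fam : (Ui ⟶ ∐ (fun _ : (Ui ⟶ ∐ (fun _ : ULift.{v} Bool => Ui)) => Ui)) → CoverFam A,
      (∀ ψ, J.covers (Fam ψ)) ∧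
      ∀ (F : CoverFam A), J.covers F → F.ι →
        ∀ h : Ui ⟶ ∐ F.obj, h ≫ Sigma.desc F.hom = ui →
        ∃ ψ, FamRefines (Fam ψ) F := by
  classical
  set H : Type v := (Ui ⟶ ∐ (fun _ : ULift.{v} Bool => Ui)) with hH
  -- stage 1: pull back the injection family of `∐ (fun _ : H => Ui)` along any `ψ`
  have st1 : ∀ ψ : Ui ⟶ ∐ (fun _ : H => Ui),
      ∃ (R : H → S) (ρ : ∀ χ, R χ ⟶ Ui) (σ : ∀ χ, R χ ⟶ Ui),
        (∀ χ, IsPullback (ρ χ) (σ χ) ψ (Sigma.ι (fun _ : H => Ui) χ)) ∧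
        J.covers ⟨H, R, ρ⟩ :=
    fun ψ => J.covers_pullback _ (hJ (fun _ : H => Ui)) ψ
  choose R ρ σ hRsq hRcov using st1
  -- stage 2: pull back along the members of `Fi`
  have st2 : ∀ (ψ : Ui ⟶ ∐ (fun _ : H => Ui)) (k : Fi.ι),
      ∃ (T : H → S) (t : ∀ χ, T χ ⟶ Fi.obj k) (s : ∀ χ, T χ ⟶ R ψ χ),
        (∀ χ, IsPullback (t χ) (s χ) (Sigma.ι Fi.obj k ≫ e.inv) (ρ ψ χ)) ∧
        J.covers ⟨H, T, t⟩ :=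
    fun ψ k => J.covers_pullback ⟨H, R ψ, ρ ψ⟩ (hRcov ψ) (Sigma.ι Fi.obj k ≫ e.inv)
  choose T t s hTsq hTcov using st2
  refine ⟨fun ψ => ⟨(Σ k : Fi.ι, H), fun x => T ψ x.1 x.2, fun x => t ψ x.1 x.2 ≫ Fi.hom x.1⟩,
    fun ψ => J.covers_comp Fi hFi (fun k => ⟨H, T ψ k, t ψ k⟩) (fun k => hTcov ψ k), ?_⟩
  intro F hF j₀ h hh
  obtain ⟨P, p, q, hPsq, hPcov⟩ := J.covers_pullback _ (hJ F.obj) h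
  have hcomm : ∀ j, p j ≫ h = q j ≫ Sigma.ι F.obj j := fun j => (hPsq j).w
  obtain ⟨colim⟩ := (hext F.obj Ui h P q p hcomm).mp hPsq
  have hfac : ∀ {Y : S} (f : ∀ j, P j ⟶ Y) (j : F.ι),
      p j ≫ colim.desc (Cofan.mk Y f) = f j := by
    intro Y f j
    simpa using colim.fac (Cofan.mk Y f) ⟨j⟩
  -- the characteristic maps
  set χ : F.ι → H := fun j => colim.desc (Cofan.mk _ (fun m => p m ≫
      (if m = j then Sigma.ι (fun _ : ULift.{v} Bool => Ui) ⟨true⟩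
        else Sigma.ι (fun _ : ULift.{v} Bool => Ui) ⟨false⟩))) with hχdef
  have hχ : ∀ j m, p m ≫ χ j = p m ≫
      (if m = j then Sigma.ι (fun _ : ULift.{v} Bool => Ui) ⟨true⟩
        else Sigma.ι (fun _ : ULift.{v} Bool => Ui) ⟨false⟩) :=
    fun j m => hfac _ m
  set ψ : Ui ⟶ ∐ (fun _ : H => Ui) :=
    colim.desc (Cofan.mk _ (fun j => p j ≫ Sigma.ι (fun _ : H => Ui) (χ j))) with hψdef
  have hψ : ∀ j, p j ≫ ψ = p j ≫ Sigma.ι (fun _ : H => Ui) (χ j) := fun j => hfac _ j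
  -- degeneracy of overlapping pieces
  have hdeg : ∀ m n, m ≠ n → χ m = χ n → DegObj (P m) := by
    intro m n hmn hcc
    have h1 := hχ m m
    rw [if_pos rfl] at h1
    have h2 := hχ n m
    rw [if_neg hmn] at h2
    exact degObj_of_injTF_eq hext (p m) (p m) (by rw [← h1, hcc, h2])
  set jsel : H → F.ι := fun c =>
    if hc : ∃ j, χ j = c ∧ ¬ DegObj (P j) then hc.choose else j₀ with hjseldef
  have hjsel : ∀ (c : H) (jj : F.ι), χ jj = c → jj ≠ jsel c → DegObj (P jj) := by
    intro c jj hjc hne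
    by_cases hc : ∃ j, χ j = c ∧ ¬ DegObj (P j)
    · have hsel : jsel c = hc.choose := by rw [hjseldef]; exact dif_pos hc
      have hspec := hc.choose_spec
      exact hdeg jj hc.choose (by rwa [hsel] at hne) (by rw [hjc, hspec.1])
    · push_neg at hc
      exact hc jj hjc
  -- the grouping of the pieces
  have colim2 := group_colimit p colim χ
  have comm2 : ∀ c : H,
      (Sigma.desc (fun jj : {j // χ j = c} => p jj.1)
        : (∐ fun jj : {j // χ j = c} => P jj.1) ⟶ Ui) ≫ ψ
      = Sigma.desc (fun jj : {j // χ j = c} => p jj.1) ≫ Sigma.ι (fun _ : H => Ui) c := by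
    intro c
    apply Sigma.hom_ext
    intro jj
    obtain ⟨j, hj⟩ := jj
    rw [← Category.assoc, Sigma.ι_desc, ← Category.assoc, Sigma.ι_desc, hψ j, hj]
  have hpb2 : ∀ c : H, IsPullback
      (Sigma.desc (fun jj : {j // χ j = c} => p jj.1))
      (Sigma.desc (fun jj : {j // χ j = c} => p jj.1)) ψ (Sigma.ι (fun _ : H => Ui) c) :=
    (hext (fun _ : H => Ui) Ui ψ (fun c => ∐ fun jj : {j // χ j = c} => P jj.1)
      (fun c => Sigma.desc (fun jj => p jj.1)) (fun c => Sigma.desc (fun jj => p jj.1))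
      comm2).mpr ⟨colim2⟩
  -- the comparison map from the chosen pullbacks
  have hq : ∀ j, q j ≫ F.hom j = p j ≫ ui := by
    intro j
    rw [← hh, ← Category.assoc, hcomm j, Category.assoc, Sigma.ι_desc]
  -- the map from each group to a single member of F
  have hwc : ∀ (c : H), ∃ w : (∐ fun jj : {j // χ j = c} => P jj.1) ⟶ F.obj (jsel c),
      w ≫ F.hom (jsel c) = Sigma.desc (fun jj : {j // χ j = c} => p jj.1) ≫ ui := by
    intro c
    have wcomp : ∀ jj : {j // χ j = c}, ∃ w0 : P jj.1 ⟶ F.obj (jsel c),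
        w0 ≫ F.hom (jsel c) = p jj.1 ≫ ui := by
      intro jj
      by_cases hh2 : jj.1 = jsel c
      · refine ⟨q jj.1 ≫ eqToHom (congrArg F.obj hh2), ?_⟩
        have : ∀ (j' : F.ι) (hjj : jj.1 = j'),
            (q jj.1 ≫ eqToHom (congrArg F.obj hjj)) ≫ F.hom j' = p jj.1 ≫ ui := by
          rintro j' rfl
          rw [eqToHom_refl, Category.comp_id]
          exact hq jj.1
        exact this _ hh2
      · obtain ⟨g0, hg0⟩ := hjsel c jj.1 jj.2 hh2 (F.obj (jsel c))
        refine ⟨g0, ?_⟩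
        obtain ⟨gA, hgA⟩ := hjsel c jj.1 jj.2 hh2 A
        rw [hgA (g0 ≫ F.hom (jsel c)), hgA (p jj.1 ≫ ui)]
    choose w0 hw0 using wcomp
    refine ⟨Sigma.desc w0, ?_⟩
    apply Sigma.hom_ext
    intro jj
    rw [← Category.assoc, Sigma.ι_desc, ← Category.assoc, Sigma.ι_desc, hw0]
  choose w hw using hwc
  -- assemble the refinement
  refine ⟨ψ, fun x => jsel x.2, ?_⟩
  rintro ⟨k, c⟩
  refine ⟨s ψ k c ≫ ((hRsq ψ c).isoIsPullback _ _ (hpb2 c)).hom ≫ w c, ?_⟩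
  show (s ψ k c ≫ _ ≫ w c) ≫ F.hom (jsel c) = t ψ k c ≫ Fi.hom k
  have hiso : ((hRsq ψ c).isoIsPullback _ _ (hpb2 c)).hom
      ≫ Sigma.desc (fun jj : {j // χ j = c} => p jj.1) = ρ ψ c :=
    IsPullback.isoIsPullback_hom_fst _ _ _ _
  have hgk : (Sigma.ι Fi.obj k ≫ e.inv) ≫ ui = Fi.hom k := by
    rw [he, Category.assoc, Iso.inv_hom_id_assoc, Sigma.ι_desc]
  calc (s ψ k c ≫ ((hRsq ψ c).isoIsPullback _ _ (hpb2 c)).hom ≫ w c) ≫ F.hom (jsel c)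
      = s ψ k c ≫ ((hRsq ψ c).isoIsPullback _ _ (hpb2 c)).hom
          ≫ (w c ≫ F.hom (jsel c)) := by simp [Category.assoc]
    _ = s ψ k c ≫ ((hRsq ψ c).isoIsPullback _ _ (hpb2 c)).hom
          ≫ Sigma.desc (fun jj : {j // χ j = c} => p jj.1) ≫ ui := by rw [hw c]
    _ = s ψ k c ≫ ρ ψ c ≫ ui := by rw [← Category.assoc ((hRsq ψ c).isoIsPullback _ _ (hpb2 c)).hom, hiso]
    _ = (t ψ k c ≫ (Sigma.ι Fi.obj k ≫ e.inv)) ≫ ui := by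
          rw [← Category.assoc, ← (hTsq ψ k c).w]
    _ = t ψ k c ≫ Fi.hom k := by rw [Category.assoc, hgk]

end AuxWISC
/-- For a superextensive site `(S,J)`, universal `J`-epimorphisms coincide with
universal `⨿J`-epimorphisms, and consequently `(S,J)` satisfies WISC if and only if
`(S,⨿J)` does. -/
theorem jun_eq_coprodJun_and_wisc
    {S : Type u} [Category.{v} S] [HasCoproducts.{v} S]
    (hext : InfExtensive S) (J : FamPretopology S) (hJ : J.Superextensive) :
    (∀ ⦃P A : S⦄ (p : P ⟶ A), FamUn J p ↔ ClassUn (CoprodCovers J) p) ∧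
    (J.WISC ↔ ClassWISC (CoprodCovers J)) := by
  constructor
  · intro P A p
    constructor
    · rintro ⟨⟨F, hF, hl⟩, hpb⟩
      refine ⟨⟨∐ F.obj, Sigma.desc F.hom, ⟨F, hF, Iso.refl _, by simp⟩,
        Sigma.desc (fun j => (hl j).choose), ?_⟩, hpb⟩
      apply Sigma.hom_ext
      intro j
      rw [← Category.assoc, Sigma.ι_desc, Sigma.ι_desc, (hl j).choose_spec]
    · rintro ⟨⟨U, u, ⟨F, hF, e, he⟩, l, hl⟩, hpb⟩
      refine ⟨⟨F, hF, fun j => ⟨Sigma.ι F.obj j ≫ e.inv ≫ l, ?_⟩⟩, hpb⟩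
      rw [Category.assoc, Category.assoc, hl, he, Iso.inv_hom_id_assoc, Sigma.ι_desc]
  · constructor
    · intro hW A
      obtain ⟨κ, Fam, hcov, href⟩ := hW A
      refine ⟨κ, fun k => ∐ (Fam k).obj, fun k => Sigma.desc (Fam k).hom,
        fun k => ⟨Fam k, hcov k, Iso.refl _, by simp⟩, ?_⟩
      rintro V v ⟨F, hF, e, he⟩
      obtain ⟨k, r, hr⟩ := href F hF
      refine ⟨k, Sigma.desc (fun m => (hr m).choose ≫ Sigma.ι F.obj (r m)) ≫ e.inv, ?_⟩
      rw [he]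
      apply Sigma.hom_ext
      intro m
      simp only [Category.assoc, Iso.inv_hom_id_assoc]
      rw [← Category.assoc, Sigma.ι_desc, Category.assoc, Sigma.ι_desc,
        (hr m).choose_spec, Sigma.ι_desc]
    · intro hC A
      obtain ⟨ι₀, U, u, hK, hw⟩ := hC A
      have hkey : ∀ i : ι₀,
          ∃ Fam : (U i ⟶ ∐ (fun _ : (U i ⟶ ∐ (fun _ : ULift.{v} Bool => U i)) => U i)) →
            CoverFam A,
          (∀ ψ, J.covers (Fam ψ)) ∧
          ∀ (F : CoverFam A), J.covers F → F.ι →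
            ∀ h : U i ⟶ ∐ F.obj, h ≫ Sigma.desc F.hom = u i →
            ∃ ψ, FamRefines (Fam ψ) F := by
        intro i
        obtain ⟨F, hF, e, he⟩ := hK i
        exact key_refine hext J hJ (u i) F hF e he
      choose Fams hFcov hFref using hkey
      refine ⟨(Σ i : ι₀, (U i ⟶ ∐ (fun _ : (U i ⟶ ∐ (fun _ : ULift.{v} Bool => U i)) => U i)))
          ⊕ ULift.{v} (PLift (∃ G : CoverFam A, J.covers G ∧ IsEmpty G.ι)),
        fun k => match k with
          | Sum.inl x => Fams x.1 x.2
          | Sum.inr pf => pf.down.down.choose, ?_, ?_⟩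
      · rintro (⟨i, ψ⟩ | pf)
        · exact hFcov i ψ
        · exact pf.down.down.choose_spec.1
      · intro F hF
        by_cases hne : Nonempty F.ι
        · obtain ⟨i, h, hh⟩ := hw (Sigma.desc F.hom) ⟨F, hF, Iso.refl _, by simp⟩
          obtain ⟨ψ, hψ⟩ := hFref i F hF hne.some h hh
          exact ⟨Sum.inl ⟨i, ψ⟩, hψ⟩
        · have hEG : ∃ G : CoverFam A, J.covers G ∧ IsEmpty G.ι :=
            ⟨F, hF, not_nonempty_iff.mp hne⟩
          refine ⟨Sum.inr ⟨⟨hEG⟩⟩, ?_⟩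
          show FamRefines hEG.choose F
          have hGE : IsEmpty hEG.choose.ι := hEG.choose_spec.2
          exact ⟨fun x => (hGE.false x).elim, fun x => (hGE.false x).elim⟩
end
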